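/- Let C be an irreducible component of a reduced Kodaira curve K with homological Del Pezzo structure ψ of degree d, and suppose ψ[C] = Σ_i n_i e_i (i.e. the coefficient of l vanishes). If ψ[C] ≠ e_i for all i, then ψ[C]·e ≥ 0 for all exceptional vectors e forces ψ[C] = 0. Consequently the components of K mapped into the span of the e_i are exactly those mapped to some e_i. -/
import Mathlib


/-!
STATEMENT 14: Let `C` be an irreducible component of a reduced Kodaira curve `K` with a
homological Del Pezzo structure `ψ` of degree `d` (`r = 9 − d`, `4 ≤ r ≤ 8`), and
suppose `ψ[C] = Σ_i n_i e_i`, i.e. the coefficient of `l` vanishes.  If `ψ[C] ≠ e_i` for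
all `i`, then the positivity condition `ψ[C]·e ≥ 0` for all exceptional vectors `e`
forces `ψ[C] = 0`.  (Consequently the components of `K` mapped into the span of the
`e_i` are exactly those mapped to some `e_i`.)
-/

namespace Stmt14

/-- The Lorentzian lattice `Λ_{1,r} = ℤ^{r+1}` with orthogonal basis `l, e_1, ..., e_r`,
`l·l = 1`, `e_i·e_i = −1`; index `0` is `l` and index `i.succ` is `e_i`. -/
def form (r : ℕ) (x y : Fin (r + 1) → ℤ) : ℤ :=
  x 0 * y 0 - ∑ i : Fin r, x i.succ * y i.succ

/-- The basis vector `l`. -/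
def lvec (r : ℕ) : Fin (r + 1) → ℤ := fun j => if j = 0 then 1 else 0

/-- The basis vector `e_i`. -/
def evec (r : ℕ) (i : Fin r) : Fin (r + 1) → ℤ := fun j => if j = i.succ then 1 else 0

/-- The anticanonical vector `k = 3l − e_1 − ⋯ − e_r`. -/
def kvec (r : ℕ) : Fin (r + 1) → ℤ := fun j => if j = 0 then 3 else -1

/-- An exceptional vector: `e·e = −1` and `e·k = 1`. -/
def IsExc (r : ℕ) (e : Fin (r + 1) → ℤ) : Prop :=
  form r e e = -1 ∧ form r e (kvec r) = 1


lemma form_comm (r : ℕ) (x y : Fin (r + 1) → ℤ) : form r x y = form r y x := by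
  simp [form, mul_comm]

lemma form_evec (r : ℕ) (x : Fin (r + 1) → ℤ) (i : Fin r) :
    form r x (evec r i) = - x i.succ := by
  simp [form, evec, Fin.succ_ne_zero, Fin.succ_inj, (Fin.succ_ne_zero i).symm]

lemma evec_exc (r : ℕ) (i : Fin r) : IsExc r (evec r i) := by
  refine ⟨?_, ?_⟩
  · rw [form_evec]; simp [evec]
  · rw [form_comm, form_evec]; simp [kvec, Fin.succ_ne_zero]

/-- The vector `l - e_i - e_j`. -/
def fvec (r : ℕ) (i j : Fin r) : Fin (r + 1) → ℤ :=
  fun m => if m = 0 then 1 else if m = i.succ then -1 else if m = j.succ then -1 else 0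

lemma sum_pair {r : ℕ} (i j : Fin r) (hij : i ≠ j) (a b : ℤ) :
    (∑ m : Fin r, if m = i then a else if m = j then b else 0) = a + b := by
  have : ∀ m : Fin r, (if m = i then a else if m = j then b else 0)
      = (if m = i then a else 0) + (if m = j then b else 0) := by
    intro m
    rcases eq_or_ne m i with h | h <;> rcases eq_or_ne m j with h2 | h2 <;>
      simp_all
  rw [Finset.sum_congr rfl (fun m _ => this m), Finset.sum_add_distrib,
    Finset.sum_ite_eq' Finset.univ i, Finset.sum_ite_eq' Finset.univ j]
  simp

lemma form_fvec (r : ℕ) (x : Fin (r + 1) → ℤ) (i j : Fin r) (hij : i ≠ j) :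
    form r x (fvec r i j) = x 0 + x i.succ + x j.succ := by
  unfold form fvec
  have hpt : ∀ m : Fin r,
      x m.succ * (if (m.succ : Fin (r+1)) = 0 then 1 else if m.succ = i.succ then -1
        else if m.succ = j.succ then -1 else 0)
      = (if m = i then -x i.succ else if m = j then -x j.succ else 0) := by
    intro m
    rcases eq_or_ne m i with h | h <;> rcases eq_or_ne m j with h2 | h2 <;>
      simp_all [Fin.succ_ne_zero, Fin.succ_inj]
  rw [Finset.sum_congr rfl (fun m _ => hpt m), sum_pair i j hij]
  simp
  ring

lemma fvec_exc (r : ℕ) (i j : Fin r) (hij : i ≠ j) : IsExc r (fvec r i j) := by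
  have hi := (Fin.succ_ne_zero i)
  have hj := (Fin.succ_ne_zero j)
  have hij' : (i.succ : Fin (r+1)) ≠ j.succ := fun h => hij (Fin.succ_inj.mp h)
  refine ⟨?_, ?_⟩
  · rw [form_fvec r _ i j hij]; simp [fvec, hi, hj, hij']
  · rw [form_comm, form_fvec r _ i j hij]; simp [kvec, hi, hj]

theorem component_in_span_of_e_is_zero (r : ℕ) (h4 : 4 ≤ r) (h8 : r ≤ 8)
    (x : Fin (r + 1) → ℤ) (h0 : x 0 = 0)
    (hne : ∀ i : Fin r, x ≠ evec r i)
    (hpos : ∀ e : Fin (r + 1) → ℤ, IsExc r e → 0 ≤ form r x e) :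
    x = 0 := by
  have hr1 : 1 < Fintype.card (Fin r) := by simp; omega
  have hle : ∀ i : Fin r, x i.succ ≤ 0 := by
    intro i
    have := hpos _ (evec_exc r i)
    rw [form_evec] at this
    omega
  have hzero : ∀ i : Fin r, x i.succ = 0 := by
    intro i
    obtain ⟨j, hj⟩ := Fintype.exists_ne_of_one_lt_card hr1 i
    have := hpos _ (fvec_exc r i j (Ne.symm hj))
    rw [form_fvec r x i j (Ne.symm hj)] at this
    have := hle i
    have := hle j
    omega
  funext m
  rcases Fin.eq_zero_or_eq_succ m with h | ⟨i, rfl⟩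
  · simpa [h] using h0
  · simpa using hzero i

end Stmt14
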